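/- Let E, E' be finite-dimensional vector spaces over a field k and let v, v' be prevaluations on E, E'. Then for all nonzero e ∈ E and nonzero e' ∈ E', the tensor product prevaluation satisfies (v ⊗ v')(e ⊗ e') = v(e) + v'(e'). -/
import Mathlib


open scoped TensorProduct

/-- A prevaluation on a vector space `E` over a field `k` (value at `0` irrelevant). -/
def IsPrevaluation (k : Type*) [Field k] {E : Type*} [AddCommGroup E] [Module k E]
    (v : E → ℚ) : Prop :=
  (∀ (c : k) (e : E), c ≠ 0 → e ≠ 0 → v (c • e) = v e) ∧
  (∀ e₁ e₂ : E, e₁ ≠ 0 → e₂ ≠ 0 → e₁ + e₂ ≠ 0 → min (v e₁) (v e₂) ≤ v (e₁ + e₂))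

/-- For `w ∈ E ⊗ E'`, the set of numbers `min_i (v (e i) + v' (e' i))` over all
representations `w = ∑ i, e i ⊗ e' i` as a finite sum of nonzero pure tensors. -/
def tensorVals (k : Type*) [Field k] {E E' : Type*} [AddCommGroup E] [Module k E]
    [AddCommGroup E'] [Module k E'] (v : E → ℚ) (v' : E' → ℚ) (w : E ⊗[k] E') : Set ℚ :=
  {q : ℚ | ∃ (m : ℕ) (hm : 0 < m) (e : Fin m → E) (e' : Fin m → E'),
      (∀ i, e i ≠ 0) ∧ (∀ i, e' i ≠ 0) ∧ w = ∑ i, e i ⊗ₜ[k] e' i ∧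
      q = Finset.univ.inf' ⟨⟨0, hm⟩, Finset.mem_univ _⟩ (fun i => v (e i) + v' (e' i))}

/-- The sublevel submodule associated to an upward-closed predicate on values. -/
def prevalSub (k : Type*) [Field k] {E : Type*} [AddCommGroup E] [Module k E]
    (v : E → ℚ) (hv : IsPrevaluation k v) (p : ℚ → Prop)
    (hp : ∀ a b : ℚ, a ≤ b → p a → p b) : Submodule k E where
  carrier := {x | x = 0 ∨ p (v x)}
  zero_mem' := Or.inl rfl
  add_mem' := by
    rintro x y (rfl | hx) (rfl | hy)
    · exact Or.inl (by simp)
    · exact Or.inr (by simpa using hy)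
    · exact Or.inr (by simpa using hx)
    · by_cases hx0 : x = 0
      · subst hx0; exact Or.inr (by simpa using hy)
      by_cases hy0 : y = 0
      · subst hy0; exact Or.inr (by simpa using hx)
      by_cases hxy : x + y = 0
      · exact Or.inl hxy
      · refine Or.inr (hp _ _ (hv.2 x y hx0 hy0 hxy) ?_)
        rcases min_cases (v x) (v y) with ⟨h, _⟩ | ⟨h, _⟩ <;> rw [h] <;> assumption
  smul_mem' := by
    rintro c x (rfl | hx)
    · exact Or.inl (by simp)
    · by_cases hc : c = 0
      · exact Or.inl (by simp [hc])
      by_cases hx0 : x = 0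
      · exact Or.inl (by simp [hx0])
      · exact Or.inr (by rwa [hv.1 c x hc hx0])

theorem preval_tmul_ne_zero {k V W : Type*} [Field k] [AddCommGroup V] [Module k V]
    [AddCommGroup W] [Module k W] {x : V} {y : W} (hx : x ≠ 0) (hy : y ≠ 0) :
    x ⊗ₜ[k] y ≠ 0 := by
  rw [Ne, ← Module.forall_dual_apply_eq_zero_iff k x, not_forall] at hx
  rw [Ne, ← Module.forall_dual_apply_eq_zero_iff k y, not_forall] at hy
  obtain ⟨f, hf⟩ := hx
  obtain ⟨g, hg⟩ := hy
  intro h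
  have : (TensorProduct.lid k k).toLinearMap.comp (TensorProduct.map f g) (x ⊗ₜ[k] y) = 0 := by
    rw [h]; simp
  simp only [LinearMap.comp_apply, TensorProduct.map_tmul, LinearEquiv.coe_coe,
    TensorProduct.lid_tmul, smul_eq_mul] at this
  exact mul_ne_zero hf hg this

/-- The tensor product prevaluation satisfies
`(v ⊗ v')(e ⊗ e') = v e + v' e'` for all nonzero `e ∈ E`, `e' ∈ E'`. -/
theorem stmt6 {k E E' : Type*} [Field k] [AddCommGroup E] [Module k E]
    [AddCommGroup E'] [Module k E'] [FiniteDimensional k E] [FiniteDimensional k E']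
    (v : E → ℚ) (v' : E' → ℚ) (hv : IsPrevaluation k v) (hv' : IsPrevaluation k v')
    (T : E ⊗[k] E' → ℚ)
    (hT : ∀ w : E ⊗[k] E', w ≠ 0 → IsGreatest (tensorVals k v v' w) (T w)) :
    ∀ (e : E) (e' : E'), e ≠ 0 → e' ≠ 0 → T (e ⊗ₜ[k] e') = v e + v' e' := by
  intro e e' he he'
  have hne : e ⊗ₜ[k] e' ≠ 0 := preval_tmul_ne_zero he he'
  obtain ⟨hmem, hub⟩ := hT _ hne
  -- `v e + v' e'` is in the set (take the trivial representation)
  have h1 : v e + v' e' ∈ tensorVals k v v' (e ⊗ₜ[k] e') := by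
    refine ⟨1, one_pos, fun _ => e, fun _ => e', fun _ => he, fun _ => he', by simp, ?_⟩
    simp
  -- every element of the set is at most `v e + v' e'`
  have h2 : ∀ q ∈ tensorVals k v v' (e ⊗ₜ[k] e'), q ≤ v e + v' e' := by
    rintro q ⟨m, hm, f, f', hf, hf', hrep, rfl⟩
    set q := Finset.univ.inf' ⟨⟨0, hm⟩, Finset.mem_univ _⟩ (fun i => v (f i) + v' (f' i)) with hq
    by_contra hlt
    push_neg at hlt
    have hqle : ∀ i, q ≤ v (f i) + v' (f' i) := fun i =>
      Finset.inf'_le _ (Finset.mem_univ i)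
    -- the two sublevel submodules
    set W : Submodule k E := prevalSub k v hv (fun a => q - v' e' ≤ a)
      (fun a b hab h => h.trans hab) with hW
    set W' : Submodule k E' := prevalSub k v' hv' (fun a => v' e' < a)
      (fun a b hab h => h.trans_le hab) with hW'
    set π : E ⊗[k] E' →ₗ[k] (E ⧸ W) ⊗[k] (E' ⧸ W') := TensorProduct.map W.mkQ W'.mkQ with hπ
    -- π kills every term of the representation
    have hterm : ∀ i, π (f i ⊗ₜ[k] f' i) = 0 := by
      intro i
      simp only [hπ, TensorProduct.map_tmul]
      by_cases hcase : q - v' e' ≤ v (f i)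
      · have : f i ∈ W := Or.inr hcase
        rw [show W.mkQ (f i) = 0 from (Submodule.Quotient.mk_eq_zero W).2 this]
        simp
      · push_neg at hcase
        have : v' e' < v' (f' i) := by
          have := hqle i
          linarith
        have : f' i ∈ W' := Or.inr this
        rw [show W'.mkQ (f' i) = 0 from (Submodule.Quotient.mk_eq_zero W').2 this]
        simp
    have hπ0 : π (e ⊗ₜ[k] e') = 0 := by
      rw [hrep, map_sum]
      exact Finset.sum_eq_zero fun i _ => hterm i
    -- but π (e ⊗ e') is a nonzero pure tensor
    have heW : e ∉ W := by
      rintro (rfl | h)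
      · exact he rfl
      · linarith
    have he'W : e' ∉ W' := by
      rintro (rfl | h)
      · exact he' rfl
      · exact lt_irrefl _ h
    have h₁ : W.mkQ e ≠ 0 := by
      rw [Submodule.mkQ_apply, Ne, Submodule.Quotient.mk_eq_zero]; exact heW
    have h₂ : W'.mkQ e' ≠ 0 := by
      rw [Submodule.mkQ_apply, Ne, Submodule.Quotient.mk_eq_zero]; exact he'W
    have : π (e ⊗ₜ[k] e') = W.mkQ e ⊗ₜ[k] W'.mkQ e' := by
      simp [hπ]
    rw [this] at hπ0
    exact preval_tmul_ne_zero h₁ h₂ hπ0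
  exact le_antisymm (h2 _ hmem) (hub h1)
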